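/- arXiv:2603.05334 — 6 statements merged into one kernel-verified Lean document; each statement's English description precedes it below -/
import Mathlib

section
/- Let K > 0 and t, x ∈ ℝ, and let n, u, φ : ℝ → ℝ → ℝ (first argument time, second argument space). Write N = n(t,·), U = u(t,·), Φ = φ(t,·). Assume: 1 + N(y) > 0 for all y; N and U have derivatives n_x and u_x at x; Φ is differentiable on ℝ and its derivative Φ' has derivative φ_{xx} at x; the maps s ↦ n(s,x) and s ↦ u(s,x) have derivatives n_t and u_t at t; and the Euler–Poisson equations hold at (t,x): n_t = −(n_x·U(x) + (1+N(x))·u_x), u_t = −(U(x)·u_x + K·n_x/(1+N(x)) + Φ'(x)), and −φ_{xx} = 1 + N(x) − exp(Φ(x)). Then the flux function y ↦ U(y)²/2 + N(y)·U(y)² + K·(N(y) − Real.log(1+N(y))) + exp(Φ(y)) − Φ(y) − Φ'(y)²/2 has derivative at x equal to −(n_t·U(x) + N(x)·u_t); that is, the local conservation law ∂ₜ(nu) + ∂ₓ[u²/2 + nu² + K(n − log(1+n)) + e^φ − φ − (∂ₓφ)²/2] = 0 holds at (t,x). -/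
/-!
Differentiating the flux and inserting the Poisson equation `φ_xx = e^φ − 1 − n`, the
electrostatic part `(e^φ − 1)φ_x − φ_x φ_xx` of its derivative collapses to `n φ_x`, while
`K ∂ₓ(n − log(1+n)) = K n n_x/(1+n)` is `n` times the pressure force. What remains is
`n_x u² + u u_x + 2 n u u_x + n (K n_x/(1+n) + φ_x)`, which is exactly `−(n_t u + n u_t)` once
the mass and momentum equations are substituted.
-/

open Real

namespace EulerPoisson

noncomputable def momentumFlux (K : ℝ) (N U Φ Φ' : ℝ → ℝ) (y : ℝ) : ℝ :=
  U y ^ 2 / 2 + N y * U y ^ 2 + K * (N y - log (1 + N y)) + exp (Φ y) - Φ y - Φ' y ^ 2 / 2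

theorem hasDerivAt_momentumFlux (K : ℝ) {N U Φ Φ' : ℝ → ℝ} {x nx ux φxx : ℝ}
    (hN : HasDerivAt N nx x) (hU : HasDerivAt U ux x) (hΦ : HasDerivAt Φ (Φ' x) x)
    (hΦ' : HasDerivAt Φ' φxx x) (hN₁ : 1 + N x ≠ 0) :
    HasDerivAt (momentumFlux K N U Φ Φ')
      (U x * ux + nx * U x ^ 2 + 2 * N x * U x * ux + K * N x * nx / (1 + N x)
        + (exp (Φ x) - 1 - φxx) * Φ' x) x := by
  have hlog : HasDerivAt (fun y => log (1 + N y)) (nx / (1 + N x)) x :=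
    (hN.const_add 1).log hN₁
  refine (((((((hU.pow 2).div_const 2).add (hN.mul (hU.pow 2))).add
    ((hN.sub hlog).const_mul K)).add hΦ.exp).sub hΦ).sub ((hΦ'.pow 2).div_const 2)).congr_deriv ?_
  rw [Pi.pow_apply]
  field_simp
  ring

end EulerPoisson

theorem euler_poisson_momentum_local_conservation_general
    (K t x : ℝ)
    (n u φ : ℝ → ℝ → ℝ)
    (nt ut nx ux φxx : ℝ)
    (hpos : ∀ y : ℝ, 1 + n t y > 0)
    (hnx : HasDerivAt (n t) nx x)
    (hux : HasDerivAt (u t) ux x)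
    (hφ : Differentiable ℝ (φ t))
    (hφxx : HasDerivAt (deriv (φ t)) φxx x)
    (heqn : nt = -(nx * u t x + (1 + n t x) * ux))
    (hequ : ut = -(u t x * ux + K * nx / (1 + n t x) + deriv (φ t) x))
    (heqφ : -φxx = 1 + n t x - Real.exp (φ t x)) :
    HasDerivAt
      (fun y => (u t y) ^ 2 / 2 + n t y * (u t y) ^ 2
        + K * (n t y - Real.log (1 + n t y))
        + Real.exp (φ t y) - φ t y - (deriv (φ t) y) ^ 2 / 2)
      (-(nt * u t x + n t x * ut)) x := by
  have hflux := EulerPoisson.hasDerivAt_momentumFlux K hnx hux (hφ x).hasDerivAt hφxx (hpos x).ne'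
  have hpoisson : exp (φ t x) - 1 - φxx = n t x := by linarith
  rw [hpoisson] at hflux
  refine hflux.congr_deriv ?_
  rw [heqn, hequ]
  field_simp [(hpos x).ne']
  ring

/-- Pointwise local conservation law for the momentum density `n·u` of the Euler–Poisson
system: if the equations hold at `(t,x)`, then the flux
`u²/2 + n·u² + K(n − log(1+n)) + e^φ − φ − (∂ₓφ)²/2` has spatial derivative
`−(∂ₜn·u + n·∂ₜu)` at `x`. -/
theorem euler_poisson_momentum_local_conservation
    (K t x : ℝ) (hK : 0 < K)
    (n u φ : ℝ → ℝ → ℝ)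
    (nt ut nx ux φxx : ℝ)
    (hpos : ∀ y : ℝ, 1 + n t y > 0)
    (hnx : HasDerivAt (n t) nx x)
    (hux : HasDerivAt (u t) ux x)
    (hφ : Differentiable ℝ (φ t))
    (hφxx : HasDerivAt (deriv (φ t)) φxx x)
    (hnt : HasDerivAt (fun s => n s x) nt t)
    (hut : HasDerivAt (fun s => u s x) ut t)
    (heqn : nt = -(nx * u t x + (1 + n t x) * ux))
    (hequ : ut = -(u t x * ux + K * nx / (1 + n t x) + deriv (φ t) x))
    (heqφ : -φxx = 1 + n t x - Real.exp (φ t x)) :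
    HasDerivAt
      (fun y => (u t y) ^ 2 / 2 + n t y * (u t y) ^ 2
        + K * (n t y - Real.log (1 + n t y))
        + Real.exp (φ t y) - φ t y - (deriv (φ t) y) ^ 2 / 2)
      (-(nt * u t x + n t x * ut)) x :=
  euler_poisson_momentum_local_conservation_general K t x n u φ nt ut nx ux φxx hpos hnx hux hφ hφxx
    heqn hequ heqφ
end

section
/- Let φ : ℝ → ℝ be differentiable with differentiable derivative, and assume φ(x) → 0 and φ'(x) → 0 as x → +∞ and as x → −∞. Define n : ℝ → ℝ by n(x) = exp(φ(x)) − 1 − φ''(x) (so that −φ'' = 1 + n − e^φ), and assume the function x ↦ n(x)·φ'(x) is Lebesgue integrable on ℝ. Then ∫ℝ n(x)·φ'(x) dx = 0. -/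
/-!
Multiplying the Poisson equation `−φ'' = 1 + n − e^φ` by `φ'` shows that `n φ'` is the derivative
of the first integral `e^φ − φ − (φ')²/2`. Since `φ` and `φ'` vanish at `±∞`, this antiderivative
tends to `1` at both ends, so the integral of `n φ'` is `1 − 1 = 0`.
-/

open Filter MeasureTheory

noncomputable def poissonEnergy (φ : ℝ → ℝ) (x : ℝ) : ℝ :=
  Real.exp (φ x) - φ x - deriv φ x ^ 2 / 2

theorem hasDerivAt_poissonEnergy {φ : ℝ → ℝ} {x : ℝ} (hφ : DifferentiableAt ℝ φ x)
    (hφ' : DifferentiableAt ℝ (deriv φ) x) :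
    HasDerivAt (poissonEnergy φ)
      ((Real.exp (φ x) - 1 - deriv (deriv φ) x) * deriv φ x) x := by
  have h := (hφ.hasDerivAt.exp.sub hφ.hasDerivAt).sub ((hφ'.hasDerivAt.pow 2).div_const 2)
  exact h.congr_deriv (by ring)

theorem tendsto_poissonEnergy {φ : ℝ → ℝ} {l : Filter ℝ} (h : Tendsto φ l (nhds 0))
    (h' : Tendsto (deriv φ) l (nhds 0)) :
    Tendsto (poissonEnergy φ) l (nhds 1) := by
  unfold poissonEnergy
  simpa using (h.rexp.sub h).sub ((h'.pow 2).div_const 2)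

/-- If `φ` is twice differentiable, `φ` and `φ'` vanish at `±∞`, and
`n = e^φ − 1 − φ''` (so that `−φ'' = 1 + n − e^φ`), then `∫ n·φ' = 0`. -/
theorem euler_poisson_n_phi_prime_integral_zero
    (φ n : ℝ → ℝ)
    (hφ : Differentiable ℝ φ) (hφ' : Differentiable ℝ (deriv φ))
    (htop : Tendsto φ atTop (nhds 0)) (hbot : Tendsto φ atBot (nhds 0))
    (htop' : Tendsto (deriv φ) atTop (nhds 0)) (hbot' : Tendsto (deriv φ) atBot (nhds 0))
    (hn : ∀ x : ℝ, n x = Real.exp (φ x) - 1 - deriv (deriv φ) x)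
    (hint : Integrable (fun x => n x * deriv φ x)) :
    ∫ x : ℝ, n x * deriv φ x = 0 := by
  have hderiv : ∀ x, HasDerivAt (poissonEnergy φ) (n x * deriv φ x) x := fun x => by
    simpa only [hn] using hasDerivAt_poissonEnergy (hφ x) (hφ' x)
  rw [integral_of_hasDerivAt_of_tendsto hderiv hint (tendsto_poissonEnergy hbot hbot')
    (tendsto_poissonEnergy htop htop'), sub_self]
end

section
/- Let c, K, λ, μ ∈ ℂ with c² ≠ K, μ ≠ 0, μ² ≠ 1, and suppose (μ²−1)·((λ−c·μ)² − K·μ²) + μ² = 0. Let A∞ be the 4×4 complex matrix with rows (cλ/(c²−K), λ/(c²−K), 0, 1/(c²−K)), (Kλ/(c²−K), cλ/(c²−K), 0, c/(c²−K)), (0, 0, 0, 1), (−1, 0, 1, 0), and let v ∈ ℂ⁴ be the vector v = (1, (c·μ−λ)/μ, 1/(1−μ²), μ/(1−μ²)). Then A∞ · v = μ · v. -/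
open Matrix

/-!
After clearing the denominators `μ`, `c² - K` and `1 - μ²`, the first two rows of `A∞ v = μ v`
are the characteristic quartic and `c` times it, while the last two hold identically (the last
entry of `v` is `μ` times the third, and the third inverts `1 - μ²`). The denominator `1 - μ²`
cannot vanish, because the quartic equals `1` where `μ² = 1`.
-/

section

variable {F : Type*} [Field F]

def asymptoticMatrix (c K lam : F) : Matrix (Fin 4) (Fin 4) F :=
  !![c * lam / (c ^ 2 - K), lam / (c ^ 2 - K), 0, 1 / (c ^ 2 - K);
     K * lam / (c ^ 2 - K), c * lam / (c ^ 2 - K), 0, c / (c ^ 2 - K);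
     0, 0, 0, 1;
     -1, 0, 1, 0]

def asymptoticEigenvector (c lam μ : F) : Fin 4 → F :=
  ![1, (c * μ - lam) / μ, 1 / (1 - μ ^ 2), μ / (1 - μ ^ 2)]

theorem one_sub_sq_ne_zero_of_quartic_eq_zero {c K lam μ : F}
    (hroot : (μ ^ 2 - 1) * ((lam - c * μ) ^ 2 - K * μ ^ 2) + μ ^ 2 = 0) : 1 - μ ^ 2 ≠ 0 := by
  intro h
  have hμ2 : μ ^ 2 = 1 := by linear_combination -h
  rw [hμ2] at hroot
  norm_num at hroot

theorem asymptoticMatrix_mulVec_asymptoticEigenvector {c K lam μ : F}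
    (hcK : c ^ 2 ≠ K) (hμ0 : μ ≠ 0)
    (hroot : (μ ^ 2 - 1) * ((lam - c * μ) ^ 2 - K * μ ^ 2) + μ ^ 2 = 0) :
    asymptoticMatrix c K lam *ᵥ asymptoticEigenvector c lam μ =
      μ • asymptoticEigenvector c lam μ := by
  have hcK' : c ^ 2 - K ≠ 0 := sub_ne_zero.mpr hcK
  have hμ1 : 1 - μ ^ 2 ≠ 0 := one_sub_sq_ne_zero_of_quartic_eq_zero hroot
  ext i
  fin_cases i <;>
    simp only [asymptoticMatrix, asymptoticEigenvector, mulVec, dotProduct, Fin.sum_univ_four,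
      of_apply, cons_val', cons_val_fin_one, cons_val, cons_val_zero, cons_val_one, Fin.isValue,
      Fin.zero_eta, Fin.mk_one, Fin.reduceFinMk, Pi.smul_apply, smul_eq_mul]
  · field_simp
    linear_combination hroot
  · field_simp
    linear_combination c * hroot
  · field_simp
    ring
  · field_simp
    ring

end

theorem right_eigenvector_asymptotic_matrix_general (c K lam μ : ℂ)
    (hcK : c ^ 2 ≠ K) (hμ0 : μ ≠ 0)
    (hroot : (μ ^ 2 - 1) * ((lam - c * μ) ^ 2 - K * μ ^ 2) + μ ^ 2 = 0)
    (A : Matrix (Fin 4) (Fin 4) ℂ)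
    (hA : A = !![c * lam / (c ^ 2 - K), lam / (c ^ 2 - K), 0, 1 / (c ^ 2 - K);
                 K * lam / (c ^ 2 - K), c * lam / (c ^ 2 - K), 0, c / (c ^ 2 - K);
                 0, 0, 0, 1;
                 -1, 0, 1, 0])
    (v : Fin 4 → ℂ)
    (hv : v = ![1, (c * μ - lam) / μ, 1 / (1 - μ ^ 2), μ / (1 - μ ^ 2)]) :
    A.mulVec v = μ • v := by
  subst hA hv
  exact asymptoticMatrix_mulVec_asymptoticEigenvector hcK hμ0 hroot

/-- The vector `v = (1, (cμ−λ)/μ, 1/(1−μ²), μ/(1−μ²))` is a right eigenvector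
of the asymptotic matrix `A∞(λ)` with eigenvalue `μ`, whenever `μ` is a root of the
characteristic quartic. -/
theorem right_eigenvector_asymptotic_matrix (c K lam μ : ℂ)
    (hcK : c ^ 2 ≠ K) (hμ0 : μ ≠ 0) (hμ1 : μ ^ 2 ≠ 1)
    (hroot : (μ ^ 2 - 1) * ((lam - c * μ) ^ 2 - K * μ ^ 2) + μ ^ 2 = 0)
    (A : Matrix (Fin 4) (Fin 4) ℂ)
    (hA : A = !![c * lam / (c ^ 2 - K), lam / (c ^ 2 - K), 0, 1 / (c ^ 2 - K);
                 K * lam / (c ^ 2 - K), c * lam / (c ^ 2 - K), 0, c / (c ^ 2 - K);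
                 0, 0, 0, 1;
                 -1, 0, 1, 0])
    (v : Fin 4 → ℂ)
    (hv : v = ![1, (c * μ - lam) / μ, 1 / (1 - μ ^ 2), μ / (1 - μ ^ 2)]) :
    A.mulVec v = μ • v :=
  right_eigenvector_asymptotic_matrix_general c K lam μ hcK hμ0 hroot A hA v hv
end

section
/- Let c, K, λ, μ ∈ ℂ with c² ≠ K, μ ≠ 0, μ² ≠ 1, and suppose (μ²−1)·((λ−c·μ)² − K·μ²) + μ² = 0. Let A∞ be the 4×4 complex matrix with rows (cλ/(c²−K), λ/(c²−K), 0, 1/(c²−K)), (Kλ/(c²−K), cλ/(c²−K), 0, c/(c²−K)), (0, 0, 0, 1), (−1, 0, 1, 0), and let π ∈ ℂ⁴ be the vector π = ((cλ/μ − (c²−K))·(1−μ²), −λ·(1−μ²)/μ, 1, μ). Then (A∞)ᵀ · π = μ · π. -/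
open Matrix

/-- The vector `π = ((cλ/μ − (c²−K))·(1−μ²), −λ(1−μ²)/μ, 1, μ)` is a left
eigenvector of the asymptotic matrix `A∞(λ)` with eigenvalue `μ` (i.e. an eigenvector of
the transpose), whenever `μ` is a root of the characteristic quartic. -/
theorem left_eigenvector_asymptotic_matrix (c K lam μ : ℂ)
    (hcK : c ^ 2 ≠ K) (hμ0 : μ ≠ 0) (hμ1 : μ ^ 2 ≠ 1)
    (hroot : (μ ^ 2 - 1) * ((lam - c * μ) ^ 2 - K * μ ^ 2) + μ ^ 2 = 0)
    (A : Matrix (Fin 4) (Fin 4) ℂ)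
    (hA : A = !![c * lam / (c ^ 2 - K), lam / (c ^ 2 - K), 0, 1 / (c ^ 2 - K);
                 K * lam / (c ^ 2 - K), c * lam / (c ^ 2 - K), 0, c / (c ^ 2 - K);
                 0, 0, 0, 1;
                 -1, 0, 1, 0])
    (π : Fin 4 → ℂ)
    (hπ : π = ![(c * lam / μ - (c ^ 2 - K)) * (1 - μ ^ 2), -lam * (1 - μ ^ 2) / μ, 1, μ]) :
    Aᵀ.mulVec π = μ • π := by
  have hcK' : c ^ 2 - K ≠ 0 := sub_ne_zero.mpr hcK
  subst hA hπ
  funext i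
  fin_cases i <;>
    simp [mulVec, dotProduct, Fin.sum_univ_four, Matrix.cons_val', Matrix.cons_val_zero,
      Matrix.cons_val_one, Matrix.head_cons, Matrix.head_fin_const, Matrix.empty_val',
      Matrix.cons_val_fin_one, Matrix.vecHead, Matrix.vecTail] <;>
    field_simp
  · linear_combination (K - c ^ 2) * hroot
  · ring
  · ring
end

section
/- Let K > 0, set V = Real.sqrt (1+K), and for ε > 0 let c = V + ε and μ₄(ε) = Real.sqrt((2·V·ε + ε²)/(1 + 2·V·ε + ε²)). Then: (a) 0 < μ₄(ε) < 1 and (c² − K)·(1 − μ₄(ε)²) = 1, equivalently c = Real.sqrt(1/(1−μ₄(ε)²) + K), so that μ₄(ε)·(c − Real.sqrt(1/(1−μ₄(ε)²) + K)) = 0 and μ₄(ε) is the positive root of the characteristic quartic at spectral parameter λ = 0; and (b) there exist C > 0 and ε₀ > 0 such that for all ε ∈ (0, ε₀), |μ₄(ε) − Real.sqrt(2·V·ε)·(1 − ((3+4K)/(4V))·ε)| ≤ C·ε²·Real.sqrt ε. -/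
/-!
With `n = 2Vε + ε²` we have `μ₄² = n / (1 + n)` and, since `V² = 1 + K`, also
`c² - K = 1 + n`; part (a) is then algebra. For part (b), let `y = √(2Vε) (1 - aε)` with
`a = (3 + 4K)/(4V)`. The choice of `a` is exactly `4aV = 4V² - 1`, which cancels the `ε²`
term of `(μ₄² - y²)(1 + n)`, so `μ₄² - y² = O(ε³)`; dividing by `μ₄ + y ≥ √ε` gives `O(ε^{5/2})`.
-/

open Real

section Ratio

variable {n : ℝ}

lemma sqrt_div_one_add_pos (hn : 0 < n) : 0 < √(n / (1 + n)) :=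
  sqrt_pos.2 (by positivity)

lemma sqrt_div_one_add_lt_one (hn : 0 ≤ n) : √(n / (1 + n)) < 1 := by
  rw [sqrt_lt' one_pos, one_pow, div_lt_one (by positivity)]
  linarith

lemma one_add_mul_one_sub_sq_sqrt_div_one_add (hn : 0 ≤ n) :
    (1 + n) * (1 - √(n / (1 + n)) ^ 2) = 1 := by
  rw [sq_sqrt (by positivity)]
  field_simp
  ring

end Ratio

lemma abs_sub_le_abs_sq_sub_div {x y s : ℝ} (hs : 0 < s) (hsx : s ≤ x) (hy : 0 ≤ y) :
    |x - y| ≤ |x ^ 2 - y ^ 2| / s := by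
  rw [le_div_iff₀ hs, sq_sub_sq, abs_mul, abs_of_nonneg (by linarith : 0 ≤ x + y), mul_comm]
  gcongr
  linarith

lemma abs_add_mul_add_mul_sq_le {p q r t : ℝ} (ht : |t| ≤ 1) :
    |p + q * t + r * t ^ 2| ≤ |p| + |q| + |r| := by
  have hq : |q * t| ≤ |q| := by
    rw [abs_mul]; exact mul_le_of_le_one_right (abs_nonneg q) ht
  have hr : |r * t ^ 2| ≤ |r| := by
    rw [abs_mul, abs_pow]
    exact mul_le_of_le_one_right (abs_nonneg r) (pow_le_one₀ (abs_nonneg t) ht)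
  calc |p + q * t + r * t ^ 2| ≤ |p| + |q * t| + |r * t ^ 2| :=
        (abs_add_le _ _).trans (add_le_add_left (abs_add_le _ _) _)
    _ ≤ |p| + |q| + |r| := by gcongr

section Expansion

variable {V a ε : ℝ}

lemma sub_approx_mul_one_add_eq (ha : 4 * a * V = 4 * V ^ 2 - 1) :
    (2 * V * ε + ε ^ 2) - 2 * V * ε * (1 - a * ε) ^ 2 * (1 + (2 * V * ε + ε ^ 2)) =
      -(2 * V * ε ^ 3) *
        ((1 - 4 * a * V + a ^ 2) + (2 * a ^ 2 * V - 2 * a) * ε + a ^ 2 * ε ^ 2) := by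
  linear_combination ε ^ 2 * ha

lemma abs_div_one_add_sub_approx_le (hV : 0 < V) (hε : 0 < ε) (hε₁ : ε ≤ 1)
    (ha : 4 * a * V = 4 * V ^ 2 - 1) :
    |(2 * V * ε + ε ^ 2) / (1 + (2 * V * ε + ε ^ 2)) - 2 * V * ε * (1 - a * ε) ^ 2| ≤
      2 * V * (|1 - 4 * a * V + a ^ 2| + |2 * a ^ 2 * V - 2 * a| + |a ^ 2|) * ε ^ 3 := by
  set n := 2 * V * ε + ε ^ 2
  have hn : 0 < n := by positivity
  set X := n / (1 + n) - 2 * V * ε * (1 - a * ε) ^ 2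
  have hX : X * (1 + n) = -(2 * V * ε ^ 3) *
      ((1 - 4 * a * V + a ^ 2) + (2 * a ^ 2 * V - 2 * a) * ε + a ^ 2 * ε ^ 2) := by
    rw [sub_mul, div_mul_cancel₀ _ (by positivity)]
    exact sub_approx_mul_one_add_eq ha
  calc |X| ≤ |X| * (1 + n) := le_mul_of_one_le_right (abs_nonneg X) (by linarith)
    _ = |X * (1 + n)| := by rw [abs_mul, abs_of_pos (by positivity : 0 < 1 + n)]
    _ = 2 * V * ε ^ 3 *
          |(1 - 4 * a * V + a ^ 2) + (2 * a ^ 2 * V - 2 * a) * ε + a ^ 2 * ε ^ 2| := by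
        rw [hX, abs_mul, abs_neg, abs_of_pos (by positivity)]
    _ ≤ 2 * V * ε ^ 3 * (|1 - 4 * a * V + a ^ 2| + |2 * a ^ 2 * V - 2 * a| + |a ^ 2|) := by
        gcongr
        exact abs_add_mul_add_mul_sq_le (by rw [abs_of_pos hε]; exact hε₁)
    _ = _ := by ring

lemma le_div_one_add_of_le_half (hV : 1 ≤ V) (hε : 0 < ε) (hε₂ : ε ≤ 1 / 2) :
    ε ≤ (2 * V * ε + ε ^ 2) / (1 + (2 * V * ε + ε ^ 2)) := by
  rw [le_div_iff₀ (by positivity)]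
  nlinarith [mul_nonneg (mul_nonneg hε.le (sub_nonneg.2 hV)) (sub_nonneg.2 hε₂),
    mul_pos hε hε, mul_nonneg (mul_nonneg hε.le hε.le) (sub_nonneg.2 hε₂)]

lemma abs_sqrt_div_one_add_sub_approx_le (hV : 1 ≤ V) (hε : 0 < ε) (hVε : 2 * V * ε < 1)
    (ha : 4 * a * V = 4 * V ^ 2 - 1) :
    |√((2 * V * ε + ε ^ 2) / (1 + (2 * V * ε + ε ^ 2))) - √(2 * V * ε) * (1 - a * ε)| ≤
      2 * V * (|1 - 4 * a * V + a ^ 2| + |2 * a ^ 2 * V - 2 * a| + |a ^ 2|) * ε ^ 2 * √ε := by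
  set M := 2 * V * (|1 - 4 * a * V + a ^ 2| + |2 * a ^ 2 * V - 2 * a| + |a ^ 2|)
  set x := √((2 * V * ε + ε ^ 2) / (1 + (2 * V * ε + ε ^ 2)))
  set y := √(2 * V * ε) * (1 - a * ε)
  have hy : 0 ≤ y := mul_nonneg (sqrt_nonneg _) (by nlinarith)
  have hx : √ε ≤ x := sqrt_le_sqrt (le_div_one_add_of_le_half hV hε (by nlinarith))
  have hsq : |x ^ 2 - y ^ 2| ≤ M * ε ^ 3 := by
    rw [sq_sqrt (by positivity), mul_pow, sq_sqrt (by positivity)]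
    exact abs_div_one_add_sub_approx_le (by linarith) hε (by nlinarith) ha
  have hε3 : ε ^ 3 = ε ^ 2 * √ε * √ε := by rw [mul_assoc, mul_self_sqrt hε.le]; ring
  calc |x - y| ≤ |x ^ 2 - y ^ 2| / √ε := abs_sub_le_abs_sq_sub_div (sqrt_pos.2 hε) hx hy
    _ ≤ M * ε ^ 3 / √ε := by gcongr
    _ = M * ε ^ 2 * √ε := by rw [hε3]; field_simp

end Expansion

/-- Exact value and small-`ε` asymptotics of the positive spatial eigenvalue
`μ₄(0,ε) = √((2Vε+ε²)/(1+2Vε+ε²))` at spectral parameter `λ = 0`, for the linearized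
Euler–Poisson system with soliton speed `c = V + ε`, `V = √(1+K)`:
(a) `0 < μ₄ < 1`, `(c²−K)(1−μ₄²) = 1`, `c = √(1/(1−μ₄²)+K)`, so `d₋(μ₄) = 0`;
(b) `μ₄(ε) = √(2Vε)·(1 − (3+4K)/(4V)·ε) + O(ε^{5/2})` as `ε → 0⁺`. -/
theorem mu4_at_zero_value_and_asymptotics (K : ℝ) (hK : 0 < K)
    (V : ℝ) (hV : V = Real.sqrt (1 + K))
    (μ₄ : ℝ → ℝ)
    (hμ : ∀ ε : ℝ, μ₄ ε = Real.sqrt ((2 * V * ε + ε ^ 2) / (1 + 2 * V * ε + ε ^ 2))) :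
    (∀ ε : ℝ, 0 < ε →
      (0 < μ₄ ε ∧ μ₄ ε < 1) ∧
      ((V + ε) ^ 2 - K) * (1 - (μ₄ ε) ^ 2) = 1 ∧
      V + ε = Real.sqrt (1 / (1 - (μ₄ ε) ^ 2) + K) ∧
      μ₄ ε * ((V + ε) - Real.sqrt (1 / (1 - (μ₄ ε) ^ 2) + K)) = 0) ∧
    ∃ C : ℝ, 0 < C ∧ ∃ ε₀ : ℝ, 0 < ε₀ ∧ ∀ ε : ℝ, 0 < ε → ε < ε₀ →
      |μ₄ ε - Real.sqrt (2 * V * ε) * (1 - ((3 + 4 * K) / (4 * V)) * ε)|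
        ≤ C * ε ^ 2 * Real.sqrt ε := by
  have hV2 : V ^ 2 = 1 + K := by rw [hV, sq_sqrt (by linarith)]
  have hV1 : 1 < V := by nlinarith [hV ▸ sqrt_nonneg (1 + K)]
  simp only [add_assoc] at hμ
  refine ⟨fun ε hε => ?_, ?_⟩
  · have hn : 0 < 2 * V * ε + ε ^ 2 := by positivity
    have hc : (V + ε) ^ 2 - K = 1 + (2 * V * ε + ε ^ 2) := by linear_combination hV2
    have hprod : ((V + ε) ^ 2 - K) * (1 - μ₄ ε ^ 2) = 1 := by
      rw [hc, hμ]; exact one_add_mul_one_sub_sq_sqrt_div_one_add hn.le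
    have hsqrt : V + ε = √(1 / (1 - μ₄ ε ^ 2) + K) := by
      rw [← eq_one_div_of_mul_eq_one_left hprod, sub_add_cancel, sqrt_sq (by linarith)]
    exact ⟨⟨hμ ε ▸ sqrt_div_one_add_pos hn, hμ ε ▸ sqrt_div_one_add_lt_one hn.le⟩, hprod,
      hsqrt, by rw [← hsqrt, sub_self, mul_zero]⟩
  · set a := (3 + 4 * K) / (4 * V)
    have ha : 4 * a * V = 4 * V ^ 2 - 1 := by
      simp only [a]; field_simp; linarith
    set M := 2 * V * (|1 - 4 * a * V + a ^ 2| + |2 * a ^ 2 * V - 2 * a| + |a ^ 2|)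
    refine ⟨M + 1, by positivity, 1 / (2 * V), by positivity, fun ε hε hε₀ => ?_⟩
    have hVε : 2 * V * ε < 1 := by rwa [lt_div_iff₀ (by positivity), mul_comm] at hε₀
    rw [hμ]
    calc _ ≤ M * ε ^ 2 * √ε := abs_sqrt_div_one_add_sub_approx_le hV1.le hε hVε ha
      _ ≤ (M + 1) * ε ^ 2 * √ε := by gcongr; linarith
end

section
/- Let K > 0 and set V = Real.sqrt (1+K). There exist C > 0 and ε₀ > 0 such that for every ε ∈ (0, ε₀) the following holds: set c = V + ε and μ₄ = Real.sqrt((2·V·ε + ε²)/(1 + 2·V·ε + ε²)); then for every function μ : ℝ → ℝ that is differentiable at 0, satisfies μ(0) = μ₄, and satisfies μ(λ)·(c − Real.sqrt(K + 1/(1−μ(λ)²))) = λ for all λ in some neighborhood of 0, one has |deriv μ 0 + 1/(2·ε)| ≤ C. -/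
/-!
The branch `μ` is a local right inverse of `d₋ = dMinus K c`, so by the inverse function theorem
`μ'(0) = 1 / d₋'(μ₄)`. Writing `A = 2Vε + ε²`, one has `μ₄² = A/(1+A)` and
`K + 1/(1 - μ₄²) = K + 1 + A = c²`; thus the factor `c - √(K + 1/(1 - μ²))` vanishes at `μ₄` and
only its derivative contributes: `d₋'(μ₄) = -A(1+A)/c`. Hence
`μ'(0) + 1/(2ε) = ((2V+ε)² - 1) / (2(2V+ε)(1+A))`, which stays bounded as `ε → 0`.
-/

open Filter

noncomputable def dMinus (K c μ : ℝ) : ℝ := μ * (c - √(K + 1 / (1 - μ ^ 2)))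

theorem hasDerivAt_dMinus {K c μ : ℝ} (hμ : 1 - μ ^ 2 ≠ 0) (hs : 0 < K + 1 / (1 - μ ^ 2)) :
    HasDerivAt (dMinus K c)
      (c - √(K + 1 / (1 - μ ^ 2)) - μ ^ 2 / (√(K + 1 / (1 - μ ^ 2)) * (1 - μ ^ 2) ^ 2)) μ := by
  have hinner : HasDerivAt (fun x : ℝ => K + 1 / (1 - x ^ 2)) (2 * μ / (1 - μ ^ 2) ^ 2) μ := by
    refine (((hasDerivAt_const μ 1).fun_div ((hasDerivAt_pow 2 μ).const_sub 1) hμ).const_add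
      K).congr_deriv ?_
    ring
  have hsqrt : √(K + 1 / (1 - μ ^ 2)) ≠ 0 := (Real.sqrt_pos.2 hs).ne'
  refine ((hasDerivAt_id' μ).fun_mul ((hinner.sqrt hs.ne').const_sub c)).congr_deriv ?_
  field_simp
  ring

theorem hasDerivAt_dMinus_sqrt_div {K c A : ℝ} (hA : 0 < A) (hc : 0 < c)
    (hroot : K + 1 + A = c ^ 2) :
    HasDerivAt (dMinus K c) (-(A * (1 + A) / c)) √(A / (1 + A)) := by
  have hsq : √(A / (1 + A)) ^ 2 = A / (1 + A) := Real.sq_sqrt (by positivity)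
  have hsub : 1 - √(A / (1 + A)) ^ 2 = 1 / (1 + A) := by
    rw [hsq]
    field_simp
    ring
  have harg : K + 1 / (1 - √(A / (1 + A)) ^ 2) = c ^ 2 := by
    rw [hsub, one_div_one_div]
    linarith
  refine (hasDerivAt_dMinus (by rw [hsub]; positivity) (by rw [harg]; positivity)).congr_deriv ?_
  rw [harg, Real.sqrt_sq hc.le, hsub, hsq]
  field_simp
  ring

theorem abs_inv_add_one_div_two_mul_le {V ε : ℝ} (hV : 1 ≤ V) (hε : 0 < ε) (hε1 : ε < 1) :
    |(-((2 * V * ε + ε ^ 2) * (1 + 2 * V * ε + ε ^ 2) / (V + ε)))⁻¹ + 1 / (2 * ε)| ≤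
      (2 * V + 1) ^ 2 / (4 * V) := by
  have hW : 0 < 2 * V + ε := by positivity
  have hval : (-((2 * V * ε + ε ^ 2) * (1 + 2 * V * ε + ε ^ 2) / (V + ε)))⁻¹ + 1 / (2 * ε) =
      ((2 * V + ε) ^ 2 - 1) / (2 * (2 * V + ε) * (1 + 2 * V * ε + ε ^ 2)) := by
    field_simp
    ring
  rw [hval, abs_of_nonneg (div_nonneg (by nlinarith) (by positivity))]
  apply div_le_div₀ (by positivity) (by nlinarith) (by positivity)
  nlinarith [mul_pos hW (show 0 < 2 * V * ε + ε ^ 2 by positivity)]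

/-- Implicit differentiation of `d₋(μ) = λ` at `λ = 0`: for `c = V + ε`, `V = √(1+K)`,
any differentiable branch `μ(λ)` with `μ(0) = μ₄(0,ε)` and
`μ(λ)·(c − √(K + 1/(1−μ(λ)²))) = λ` near `0` satisfies
`∂_λ μ(0) = −(1/(2ε))·(1 + O(ε))`. -/
theorem deriv_mu4_at_zero (K : ℝ) (hK : 0 < K) (V : ℝ) (hV : V = Real.sqrt (1 + K)) :
    ∃ C : ℝ, 0 < C ∧ ∃ ε₀ : ℝ, 0 < ε₀ ∧ ∀ ε : ℝ, 0 < ε → ε < ε₀ →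
      ∀ μ : ℝ → ℝ, DifferentiableAt ℝ μ 0 →
        μ 0 = Real.sqrt ((2 * V * ε + ε ^ 2) / (1 + 2 * V * ε + ε ^ 2)) →
        (∀ᶠ lam in nhds (0 : ℝ),
          μ lam * ((V + ε) - Real.sqrt (K + 1 / (1 - (μ lam) ^ 2))) = lam) →
        |deriv μ 0 + 1 / (2 * ε)| ≤ C := by
  have hV2 : V ^ 2 = 1 + K := by rw [hV, Real.sq_sqrt (by positivity)]
  have hV1 : 1 ≤ V := by rw [hV]; exact Real.one_le_sqrt.2 (by linarith)
  refine ⟨(2 * V + 1) ^ 2 / (4 * V), by positivity, 1, one_pos, ?_⟩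
  intro ε hε hε1 μ hμ hμ0 hroot
  have hc : 0 < V + ε := by positivity
  have hd := hasDerivAt_dMinus_sqrt_div (K := K) (A := 2 * V * ε + ε ^ 2) (by positivity) hc
    (by linear_combination -hV2)
  rw [← add_assoc, ← hμ0] at hd
  rw [(hd.of_local_left_inverse hμ.continuousAt (neg_ne_zero.2 (by positivity)) hroot).deriv]
  exact abs_inv_add_one_div_two_mul_le hV1 hε hε1
end
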